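/- For λ ∈ [0,1], say the problem P_λ is feasible if there exists a flow f (f_{ij} ≥ 0 on edges of E) with ∑_{j : (i,j)∈E} f_{ij} ≤ v_i for every i ∈ S and ∑_{i : (i,j)∈E} f_{ij} = λ·e_j for every j ∈ A. Assume A is nonempty and let λ* = sup{λ ∈ [0,1] : P_λ is feasible} (P_0 is feasible, so the supremum exists). Then for every ratio-balanced maximum flow f, max_{j∈A} r_j^f = 1 − λ*. -/

import Mathlib

open Finset
open scoped Classical

variable {S A : Type*} [Fintype S] [Fintype A]

/-- A feasible flow: nonnegative on edges, zero off edges, outflow of each security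
bounded by its value, inflow of each account bounded by its exposure. -/
def Feasible (E : Finset (S × A)) (v : S → ℝ) (e : A → ℝ) (f : S → A → ℝ) : Prop :=
  (∀ i j, (i, j) ∈ E → 0 ≤ f i j) ∧
  (∀ i j, (i, j) ∉ E → f i j = 0) ∧
  (∀ i : S, ∑ j ∈ Finset.univ.filter (fun j => (i, j) ∈ E), f i j ≤ v i) ∧
  (∀ j : A, ∑ i ∈ Finset.univ.filter (fun i => (i, j) ∈ E), f i j ≤ e j)

/-- The value of a flow: total flow on all edges. -/
noncomputable def flowValue (E : Finset (S × A)) (f : S → A → ℝ) : ℝ :=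
  ∑ p ∈ E, f p.1 p.2

/-- The risk ratio of account `j` under a flow `f`. -/
noncomputable def riskRatio (E : Finset (S × A)) (e : A → ℝ) (f : S → A → ℝ) (j : A) : ℝ :=
  (e j - ∑ i ∈ Finset.univ.filter (fun i => (i, j) ∈ E), f i j) / e j

/-- A maximum flow: feasible, with value maximal among feasible flows. -/
def IsMaxFlow (E : Finset (S × A)) (v : S → ℝ) (e : A → ℝ) (f : S → A → ℝ) : Prop :=
  Feasible E v e f ∧ ∀ g : S → A → ℝ, Feasible E v e g → flowValue E g ≤ flowValue E f

/-- The ratio constraint: if `f` sends positive flow from `i` to `j` and `i` could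
also be used for `l`, then the risk ratio of `j` is at least that of `l`. -/
def RatioConstraint (E : Finset (S × A)) (e : A → ℝ) (f : S → A → ℝ) : Prop :=
  ∀ i j l, (i, j) ∈ E → 0 < f i j → (i, l) ∈ E →
    riskRatio E e f l ≤ riskRatio E e f j

/-- A ratio-balanced (maximum) flow. -/
def RatioBalanced (E : Finset (S × A)) (v : S → ℝ) (e : A → ℝ) (f : S → A → ℝ) : Prop :=
  IsMaxFlow E v e f ∧ RatioConstraint E e f

/-- The weighted sum of squared risk ratios `∑ j, e j * (r_j^f)^2`. -/
noncomputable def objective (E : Finset (S × A)) (e : A → ℝ) (f : S → A → ℝ) : ℝ :=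
  ∑ j : A, e j * (riskRatio E e f j) ^ 2

/-- An MWSR flow: a feasible flow minimizing the weighted sum of squared risk
ratios among all feasible flows. -/
def MWSR (E : Finset (S × A)) (v : S → ℝ) (e : A → ℝ) (f : S → A → ℝ) : Prop :=
  Feasible E v e f ∧ ∀ g : S → A → ℝ, Feasible E v e g → objective E e f ≤ objective E e g

/-- The parameterized flow problem `P_λ`: a flow respecting the value
constraints whose inflow into every account `j` is exactly `λ · e j`. -/
def PFeasible (E : Finset (S × A)) (v : S → ℝ) (e : A → ℝ) (lam : ℝ) : Prop :=
  ∃ f : S → A → ℝ,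
    (∀ i j, (i, j) ∈ E → 0 ≤ f i j) ∧
    (∀ i j, (i, j) ∉ E → f i j = 0) ∧
    (∀ i : S, ∑ j ∈ Finset.univ.filter (fun j => (i, j) ∈ E), f i j ≤ v i) ∧
    (∀ j : A, ∑ i ∈ Finset.univ.filter (fun i => (i, j) ∈ E), f i j = lam * e j)

/-!
Let `R` be the largest risk ratio of `f`. Scaling the flow into every account `j` down to
`(1 - R) * e j` keeps it feasible, so `P_(1-R)` is feasible. Conversely, let `J` be the accounts
of ratio `R` and `N(J)` the securities adjacent to `J`. When `R > 0` every account of `J` has spare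
exposure, so maximality of `f` exhausts every security of `N(J)`, and the ratio constraint sends
all of its flow into `J`; hence `(1 - R) * e(J) = v(N(J))`. A solution of `P_λ` feeds `λ * e(J)`
into `J` from `N(J)` alone, so `λ * e(J) ≤ v(N(J))`, i.e. `λ ≤ 1 - R`.
-/

noncomputable def inflow (E : Finset (S × A)) (f : S → A → ℝ) (j : A) : ℝ :=
  ∑ i ∈ univ.filter (fun i => (i, j) ∈ E), f i j

noncomputable def outflow (E : Finset (S × A)) (f : S → A → ℝ) (i : S) : ℝ :=
  ∑ j ∈ univ.filter (fun j => (i, j) ∈ E), f i j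

noncomputable def addOnEdge (f : S → A → ℝ) (i : S) (j : A) (ε : ℝ) : S → A → ℝ :=
  fun i' j' => f i' j' + if i' = i ∧ j' = j then ε else 0

noncomputable def neighbors (E : Finset (S × A)) (J : Finset A) : Finset S :=
  univ.filter fun i => ∃ j ∈ J, (i, j) ∈ E

section

variable {E : Finset (S × A)} {v : S → ℝ} {e : A → ℝ} {f : S → A → ℝ} {i : S} {j : A} {ε : ℝ}

omit [Fintype A] in
theorem inflow_nonneg (hpos : ∀ i j, (i, j) ∈ E → 0 ≤ f i j) (j : A) : 0 ≤ inflow E f j :=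
  sum_nonneg fun i hi => hpos i j (mem_filter.1 hi).2

omit [Fintype A] in
theorem inflow_eq_sum (hzero : ∀ i j, (i, j) ∉ E → f i j = 0) (j : A) :
    inflow E f j = ∑ i, f i j :=
  sum_filter_of_ne fun i _ h => by_contra fun hij => h (hzero i j hij)

omit [Fintype S] in
theorem outflow_eq_sum (hzero : ∀ i j, (i, j) ∉ E → f i j = 0) (i : S) :
    outflow E f i = ∑ j, f i j :=
  sum_filter_of_ne fun j _ h => by_contra fun hij => h (hzero i j hij)

omit [Fintype A] in
theorem riskRatio_eq_sub_inflow_div : riskRatio E e f j = (e j - inflow E f j) / e j :=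
  rfl

omit [Fintype A] in
theorem inflow_eq_one_sub_riskRatio_mul (he : e j ≠ 0) :
    inflow E f j = (1 - riskRatio E e f j) * e j := by
  rw [riskRatio_eq_sub_inflow_div, one_sub_div he, div_mul_cancel₀ _ he]
  ring

theorem Feasible.riskRatio_mem_Icc (hf : Feasible E v e f) (he : 0 < e j) :
    riskRatio E e f j ∈ Set.Icc 0 1 := by
  have hI := inflow_nonneg hf.1 j
  have hIe : inflow E f j ≤ e j := hf.2.2.2 j
  rw [riskRatio_eq_sub_inflow_div, Set.mem_Icc, div_le_one he]
  exact ⟨div_nonneg (by linarith) he.le, by linarith⟩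

theorem Feasible.pFeasible_of_le_inflow {lam : ℝ} (hf : Feasible E v e f) (hlam : 0 ≤ lam)
    (he : ∀ j, 0 ≤ e j) (hle : ∀ j, lam * e j ≤ inflow E f j) : PFeasible E v e lam := by
  obtain ⟨hpos, hzero, hout, -⟩ := hf
  have hI := inflow_nonneg hpos
  refine ⟨fun i j => f i j * (lam * e j / inflow E f j),
    fun i j hij => mul_nonneg (hpos i j hij) (div_nonneg (mul_nonneg hlam (he j)) (hI j)),
    fun i j hij => by simp [hzero i j hij],
    fun i => (sum_le_sum fun j hj => ?_).trans (hout i), fun j => ?_⟩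
  · exact mul_le_of_le_one_right (hpos i j (mem_filter.1 hj).2) (div_le_one_of_le₀ (hle j) (hI j))
  · rw [← sum_mul]
    change inflow E f j * _ = _
    rcases (hI j).eq_or_lt with h | h
    · rw [← h, zero_mul]
      exact le_antisymm (mul_nonneg hlam (he j)) (h ▸ hle j)
    · exact mul_div_cancel₀ _ h.ne'

theorem Feasible.pFeasible_one_sub_of_riskRatio_le {R : ℝ} (hf : Feasible E v e f)
    (he : ∀ j, 0 < e j) (hR : ∀ j, riskRatio E e f j ≤ R) (hR1 : R ≤ 1) :
    PFeasible E v e (1 - R) :=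
  hf.pFeasible_of_le_inflow (sub_nonneg.2 hR1) (fun j => (he j).le) fun j => by
    rw [inflow_eq_one_sub_riskRatio_mul (he j).ne']
    exact mul_le_mul_of_nonneg_right (sub_le_sub_left (hR j) 1) (he j).le

omit [Fintype A] in
theorem inflow_addOnEdge (hij : (i, j) ∈ E) (j' : A) :
    inflow E (addOnEdge f i j ε) j' = inflow E f j' + if j' = j then ε else 0 := by
  by_cases h : j' = j
  · subst h; simp [inflow, addOnEdge, sum_add_distrib, hij]
  · simp [inflow, addOnEdge, h]

omit [Fintype S] in
theorem outflow_addOnEdge (hij : (i, j) ∈ E) (i' : S) :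
    outflow E (addOnEdge f i j ε) i' = outflow E f i' + if i' = i then ε else 0 := by
  by_cases h : i' = i
  · subst h; simp [outflow, addOnEdge, sum_add_distrib, hij]
  · simp [outflow, addOnEdge, h]

omit [Fintype S] [Fintype A] in
theorem flowValue_addOnEdge (hij : (i, j) ∈ E) :
    flowValue E (addOnEdge f i j ε) = flowValue E f + ε := by
  have hedge (p : S × A) : (p.1 = i ∧ p.2 = j) ↔ p = (i, j) := by rw [Prod.ext_iff]
  simp only [flowValue, addOnEdge, sum_add_distrib, hedge, sum_ite_eq', if_pos hij]

theorem IsMaxFlow.outflow_eq_of_inflow_lt (hf : IsMaxFlow E v e f) (hij : (i, j) ∈ E)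
    (hj : inflow E f j < e j) : outflow E f i = v i := by
  obtain ⟨⟨hpos, hzero, hout, hin⟩, hmax⟩ := hf
  by_contra hne
  have hi : outflow E f i < v i := lt_of_le_of_ne (hout i) hne
  set ε := min (v i - outflow E f i) (e j - inflow E f j)
  have hε : 0 < ε := lt_min (sub_pos.2 hi) (sub_pos.2 hj)
  have hfeas : Feasible E v e (addOnEdge f i j ε) := by
    refine ⟨fun i' j' h => ?_, fun i' j' h => ?_, fun i' => ?_, fun j' => ?_⟩
    · exact add_nonneg (hpos i' j' h) (by split_ifs <;> linarith)
    · have : ¬(i' = i ∧ j' = j) := by rintro ⟨rfl, rfl⟩; exact h hij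
      simp [addOnEdge, hzero i' j' h, this]
    · change outflow E (addOnEdge f i j ε) i' ≤ v i'
      rw [outflow_addOnEdge hij]
      split_ifs with h
      · subst h; linarith [min_le_left (v i' - outflow E f i') (e j - inflow E f j)]
      · rw [add_zero]; exact hout i'
    · change inflow E (addOnEdge f i j ε) j' ≤ e j'
      rw [inflow_addOnEdge hij]
      split_ifs with h
      · subst h; linarith [min_le_right (v i - outflow E f i) (e j' - inflow E f j')]
      · rw [add_zero]; exact hin j'
  have := hmax _ hfeas
  rw [flowValue_addOnEdge hij] at this
  linarith

omit [Fintype A] in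
theorem sum_inflow_eq_sum_neighbors (hzero : ∀ i j, (i, j) ∉ E → f i j = 0) (J : Finset A) :
    ∑ j ∈ J, inflow E f j = ∑ i ∈ neighbors E J, ∑ j ∈ J, f i j := by
  simp_rw [inflow_eq_sum hzero]
  rw [sum_comm]
  refine (sum_subset (subset_univ _) fun i _ hi => sum_eq_zero fun j hj => ?_).symm
  exact hzero i j fun hij => hi (mem_filter.2 ⟨mem_univ i, j, hj, hij⟩)

theorem sum_inflow_le_sum_outflow_neighbors (hpos : ∀ i j, (i, j) ∈ E → 0 ≤ f i j)
    (hzero : ∀ i j, (i, j) ∉ E → f i j = 0) (J : Finset A) :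
    ∑ j ∈ J, inflow E f j ≤ ∑ i ∈ neighbors E J, outflow E f i := by
  rw [sum_inflow_eq_sum_neighbors hzero]
  refine sum_le_sum fun i _ => ?_
  rw [outflow_eq_sum hzero]
  refine sum_le_sum_of_subset_of_nonneg (subset_univ _) fun j _ _ => ?_
  by_cases hij : (i, j) ∈ E
  · exact hpos i j hij
  · exact (hzero i j hij).ge

theorem sum_inflow_eq_sum_outflow_neighbors {J : Finset A}
    (hzero : ∀ i j, (i, j) ∉ E → f i j = 0) (hclosed : ∀ i ∈ neighbors E J, ∀ l ∉ J, f i l = 0) :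
    ∑ j ∈ J, inflow E f j = ∑ i ∈ neighbors E J, outflow E f i := by
  rw [sum_inflow_eq_sum_neighbors hzero]
  refine sum_congr rfl fun i hi => ?_
  rw [outflow_eq_sum hzero]
  exact sum_subset (subset_univ _) fun l _ hl => hclosed i hi l hl

omit [Fintype A] in
theorem RatioConstraint.riskRatio_eq_of_pos {l : A} {R : ℝ} (hr : RatioConstraint E e f)
    (hR : ∀ j, riskRatio E e f j ≤ R) (hj : riskRatio E e f j = R) (hij : (i, j) ∈ E)
    (hil : (i, l) ∈ E) (hfl : 0 < f i l) : riskRatio E e f l = R :=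
  le_antisymm (hR l) (hj ▸ hr i l j hil hfl hij)

theorem RatioBalanced.le_one_sub_of_pFeasible {R lam : ℝ} {j₀ : A} (hf : RatioBalanced E v e f)
    (he : ∀ j, 0 < e j) (hR : ∀ j, riskRatio E e f j ≤ R) (hj₀ : riskRatio E e f j₀ = R)
    (hlam1 : lam ≤ 1) (hlam : PFeasible E v e lam) : lam ≤ 1 - R := by
  obtain ⟨hmax, hratio⟩ := hf
  obtain ⟨hpos, hzero, -, -⟩ := hmax.1
  obtain ⟨g, hgpos, hgzero, hgout, hgin⟩ := hlam
  rcases le_or_gt R 0 with hR0 | hR0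
  · linarith
  set J := univ.filter fun j => riskRatio E e f j = R
  have hJ : ∀ j ∈ J, inflow E f j = (1 - R) * e j := fun j hj => by
    rw [inflow_eq_one_sub_riskRatio_mul (he j).ne', (mem_filter.1 hj).2]
  have hsaturated : ∀ i ∈ neighbors E J, outflow E f i = v i := fun i hi => by
    obtain ⟨j, hj, hij⟩ := (mem_filter.1 hi).2
    exact hmax.outflow_eq_of_inflow_lt hij (by rw [hJ j hj]; nlinarith [he j])
  have hclosed : ∀ i ∈ neighbors E J, ∀ l ∉ J, f i l = 0 := fun i hi l hl => by
    obtain ⟨j, hj, hij⟩ := (mem_filter.1 hi).2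
    by_contra hne
    by_cases hil : (i, l) ∈ E
    · exact hl (mem_filter.2 ⟨mem_univ l, hratio.riskRatio_eq_of_pos hR (mem_filter.1 hj).2
        hij hil ((hpos i l hil).lt_of_ne' hne)⟩)
    · exact hne (hzero i l hil)
  have hJe : 0 < ∑ j ∈ J, e j := sum_pos (fun j _ => he j) ⟨j₀, mem_filter.2 ⟨mem_univ _, hj₀⟩⟩
  refine le_of_mul_le_mul_right ?_ hJe
  calc lam * ∑ j ∈ J, e j = ∑ j ∈ J, inflow E g j := by
        rw [mul_sum]; exact sum_congr rfl fun j _ => (hgin j).symm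
    _ ≤ ∑ i ∈ neighbors E J, outflow E g i := sum_inflow_le_sum_outflow_neighbors hgpos hgzero J
    _ ≤ ∑ i ∈ neighbors E J, v i := sum_le_sum fun i _ => hgout i
    _ = ∑ i ∈ neighbors E J, outflow E f i := sum_congr rfl fun i hi => (hsaturated i hi).symm
    _ = ∑ j ∈ J, inflow E f j := (sum_inflow_eq_sum_outflow_neighbors hzero hclosed).symm
    _ = (1 - R) * ∑ j ∈ J, e j := by rw [mul_sum]; exact sum_congr rfl hJ

end

theorem maxRiskRatio_eq_one_sub_lamStar_general [Nonempty A] (E : Finset (S × A)) (v : S → ℝ) (e : A → ℝ)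
    (he : ∀ j, 0 < e j)
    (lamStar : ℝ)
    (hlam : lamStar = sSup {lam : ℝ | lam ∈ Set.Icc (0 : ℝ) 1 ∧ PFeasible E v e lam})
    (f : S → A → ℝ) (hf : RatioBalanced E v e f) :
    Finset.univ.sup' Finset.univ_nonempty (riskRatio E e f) = 1 - lamStar := by
  set R := univ.sup' univ_nonempty (riskRatio E e f)
  obtain ⟨j₀, -, hj₀⟩ := exists_mem_eq_sup' univ_nonempty (riskRatio E e f)
  have hR : ∀ j, riskRatio E e f j ≤ R := fun j => le_sup' _ (mem_univ j)
  obtain ⟨hR0, hR1⟩ := hj₀ ▸ hf.1.1.riskRatio_mem_Icc (he j₀)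
  have hgreatest : IsGreatest {lam : ℝ | lam ∈ Set.Icc (0 : ℝ) 1 ∧ PFeasible E v e lam} (1 - R) :=
    ⟨⟨⟨sub_nonneg.2 hR1, by linarith⟩, hf.1.1.pFeasible_one_sub_of_riskRatio_le he hR hR1⟩,
      fun lam ⟨⟨_, hlam1⟩, hP⟩ => hf.le_one_sub_of_pFeasible he hR hj₀.symm hlam1 hP⟩
  rw [hlam, hgreatest.csSup_eq, sub_sub_cancel]

/-- for every ratio-balanced maximum flow, the maximum risk ratio
equals `1 - λ*`, where `λ*` is the supremum of the `λ ∈ [0,1]` with `P_λ` feasible. -/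
theorem maxRiskRatio_eq_one_sub_lamStar [Nonempty A] (E : Finset (S × A)) (v : S → ℝ) (e : A → ℝ)
    (hv : ∀ i, 0 ≤ v i) (he : ∀ j, 0 < e j)
    (lamStar : ℝ)
    (hlam : lamStar = sSup {lam : ℝ | lam ∈ Set.Icc (0 : ℝ) 1 ∧ PFeasible E v e lam})
    (f : S → A → ℝ) (hf : RatioBalanced E v e f) :
    Finset.univ.sup' Finset.univ_nonempty (riskRatio E e f) = 1 - lamStar :=
  maxRiskRatio_eq_one_sub_lamStar_general E v e he lamStar hlam f hf
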